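/- arXiv:2203.05713 — 9 statements merged into one kernel-verified Lean document; each statement's English description precedes it below -/
import Mathlib

section
/- Let G be a group and t₀ ∈ G an element with t₀² = 1 and t₀ ≠ 1. Assume that every element of G of order two is conjugate to t₀, i.e. for every g ∈ G with g² = 1 and g ≠ 1 there exists h ∈ G with h * t₀ * h⁻¹ = g. Define θ(g) = t₀ * g * t₀⁻¹ and X = { x ∈ G : x * t₀ * x = t₀ } (equivalently, x * θ(x) = 1). Then X is the disjoint union of the two subsets O = { g * t₀ * g⁻¹ * t₀⁻¹ : g ∈ G } (the orbit of 1 under the twisted action g • x = g x θ(g)⁻¹) and the singleton {t₀}; that is, X = O ∪ {t₀}, t₀ ∉ O, and moreover t₀ is a fixed point of the twisted action: g * t₀ * θ(g)⁻¹ = t₀ for all g ∈ G. -/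
/-- If all order-two elements of `G` are conjugate to the order-two element `t₀`, and
`θ = Int(t₀)`, then the set `X = {x | x * t₀ * x = t₀}` of `θ`-split elements is the
disjoint union of the twisted orbit of `1` and the singleton `{t₀}`, and `t₀` is a
fixed point of the twisted action. -/
theorem theta_split_two_orbits
    {G : Type*} [Group G] (t₀ : G) (ht : t₀ ^ 2 = 1) (hne : t₀ ≠ 1)
    (hconj : ∀ g : G, g ^ 2 = 1 → g ≠ 1 → ∃ h : G, h * t₀ * h⁻¹ = g) :
    {x : G | x * t₀ * x = t₀} =
        {x : G | ∃ g : G, x = g * t₀ * g⁻¹ * t₀⁻¹} ∪ {t₀} ∧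
    t₀ ∉ {x : G | ∃ g : G, x = g * t₀ * g⁻¹ * t₀⁻¹} ∧
    (∀ g : G, g * t₀ * (t₀ * g * t₀⁻¹)⁻¹ = t₀) := by
  have hsq : t₀ * t₀ = 1 := by rw [← sq]; exact ht
  have hinv : t₀⁻¹ = t₀ := by
    rw [inv_eq_iff_mul_eq_one]; exact hsq
  refine ⟨?_, ?_, ?_⟩
  · ext x
    simp only [Set.mem_setOf_eq, Set.mem_union, Set.mem_singleton_iff]
    constructor
    · intro hx
      by_cases hxt : x * t₀ = 1
      · right
        have : x = t₀⁻¹ := eq_inv_of_mul_eq_one_left hxt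
        rw [this, hinv]
      · left
        have hord : (x * t₀) ^ 2 = 1 := by
          have : x * t₀ * (x * t₀) = 1 := by
            calc x * t₀ * (x * t₀) = (x * t₀ * x) * t₀ := by group
            _ = t₀ * t₀ := by rw [hx]
            _ = 1 := hsq
          rw [sq]; exact this
        obtain ⟨h, hh⟩ := hconj (x * t₀) hord hxt
        exact ⟨h, by rw [hh]; group⟩
    · rintro (⟨g, rfl⟩ | hx)
      · calc g * t₀ * g⁻¹ * t₀⁻¹ * t₀ * (g * t₀ * g⁻¹ * t₀⁻¹)
            = g * (t₀ * t₀) * g⁻¹ * t₀⁻¹ := by group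
        _ = t₀⁻¹ := by rw [hsq]; group
        _ = t₀ := hinv
      · rw [hx]
        calc t₀ * t₀ * t₀ = 1 * t₀ := by rw [hsq]
        _ = t₀ := one_mul t₀
  · rintro ⟨g, hg⟩
    apply hne
    have h := congrArg (fun y => g⁻¹ * (y * t₀) * g) hg
    simp only [mul_assoc, hsq, inv_mul_cancel_left, mul_inv_cancel_left,
      inv_mul_cancel, mul_one, mul_inv_cancel] at h
    exact h.symm
  · intro g
    calc g * t₀ * (t₀ * g * t₀⁻¹)⁻¹ = g * (t₀ * t₀) * g⁻¹ * t₀⁻¹ := by group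
    _ = t₀⁻¹ := by rw [hsq]; group
    _ = t₀ := hinv
end

section
/- Let F be a field and C the split Cayley algebra over F. For c ∈ GL₂(F) and p ∈ SL₂(F) (i.e. det(p) = 1), define φ_{c,p} : C → C by φ_{c,p}((x | y)) = (c·x·c⁻¹ | p·c·y·c⁻¹). Then φ_{c,p} is an F-algebra automorphism of C, i.e. an F-linear bijection satisfying φ_{c,p}(u·v) = φ_{c,p}(u)·φ_{c,p}(v) for all u, v ∈ C, and it maps the subspace M₂(F) × {0} onto itself. -/
open Matrix

/-- The underlying space of the split Cayley algebra over `F`: pairs `(x | y)` of 2×2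
matrices. -/
abbrev Cayley (F : Type*) [Field F] := Matrix (Fin 2) (Fin 2) F × Matrix (Fin 2) (Fin 2) F

variable {F : Type*} [Field F]

/-- Multiplication of the split Cayley algebra. -/
def cmul (a b : Cayley F) : Cayley F :=
  (a.1 * b.1 + (b.2).adjugate * a.2, b.2 * a.1 + a.2 * (b.1).adjugate)

/-- The map `φ_{c,p} (x | y) = (c·x·c⁻¹ | p·c·y·c⁻¹)` for `c ∈ GL₂(F)`, `p ∈ SL₂(F)`. -/
def phiMap (c : GL (Fin 2) F) (p : Matrix (Fin 2) (Fin 2) F) (z : Cayley F) : Cayley F :=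
  ((c : Matrix (Fin 2) (Fin 2) F) * z.1 * ((c⁻¹ : GL (Fin 2) F) : Matrix (Fin 2) (Fin 2) F),
   p * ((c : Matrix (Fin 2) (Fin 2) F) * z.2 * ((c⁻¹ : GL (Fin 2) F) : Matrix (Fin 2) (Fin 2) F)))

/-!
Both components of `φ_{c,p}` are conjugation by `c`, followed on the second by left
multiplication by `p`. Conjugation commutes with the adjugate, `adj (c X c⁻¹) = c (adj X) c⁻¹`,
and `adj (p Y) = adj Y · adj p` with `adj p · p = 1` when `det p = 1`; so in the first component
of `φ(u) φ(v)` the factors `p` cancel, and `φ(u v) = φ(u) φ(v)` follows. The maps compose as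
`φ_{c,p} ∘ φ_{d,q} = φ_{cd, p c q c⁻¹}`, which exhibits the inverse `φ_{c⁻¹, c⁻¹ p⁻¹ c}`.
-/

local notation "M₂" => Matrix (Fin 2) (Fin 2) F

namespace Matrix

variable {n R : Type*} [Fintype n] [DecidableEq n] [CommRing R]

theorem adjugate_units_eq_det_smul_inv (u : (Matrix n n R)ˣ) :
    adjugate (u : Matrix n n R) = det (u : Matrix n n R) • (↑u⁻¹ : Matrix n n R) := by
  calc adjugate (u : Matrix n n R) = ↑u⁻¹ * (↑u * adjugate (u : Matrix n n R)) := by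
        rw [Units.inv_mul_cancel_left]
    _ = _ := by rw [mul_adjugate, mul_smul_comm, mul_one]

theorem adjugate_units_conj (u : (Matrix n n R)ˣ) (A : Matrix n n R) :
    adjugate ((u : Matrix n n R) * A * (↑u⁻¹ : Matrix n n R)) =
      u * adjugate A * (↑u⁻¹ : Matrix n n R) := by
  have hdet : det (u : Matrix n n R) * det (↑u⁻¹ : Matrix n n R) = 1 := by
    rw [← det_mul, Units.mul_inv, det_one]
  rw [adjugate_mul_distrib, adjugate_mul_distrib, adjugate_units_eq_det_smul_inv,
    adjugate_units_eq_det_smul_inv, inv_inv]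
  simp only [smul_mul_assoc, mul_smul_comm, smul_smul, hdet, one_smul, mul_assoc]

end Matrix

theorem phiMap_comp (c d : GL (Fin 2) F) (p q : M₂) (z : Cayley F) :
    phiMap c p (phiMap d q z) = phiMap (c * d) (p * c * q * (↑c⁻¹ : M₂)) z := by
  simp only [phiMap, Units.val_mul, _root_.mul_inv_rev, mul_assoc,
    Units.inv_mul_cancel_left]

theorem phiMap_one_one (z : Cayley F) : phiMap 1 1 z = z := by
  simp [phiMap]

theorem phiMap_add (c : GL (Fin 2) F) (p : M₂) (a b : Cayley F) :
    phiMap c p (a + b) = phiMap c p a + phiMap c p b := by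
  simp only [phiMap, Prod.fst_add, Prod.snd_add, mul_add, add_mul, Prod.mk_add_mk]

theorem phiMap_smul (c : GL (Fin 2) F) (p : M₂) (r : F) (a : Cayley F) :
    phiMap c p (r • a) = r • phiMap c p a := by
  simp only [phiMap, Prod.smul_fst, Prod.smul_snd, mul_smul_comm, smul_mul_assoc, Prod.smul_mk]

theorem phiMap_bijective (c : GL (Fin 2) F) {p : M₂} (hp : IsUnit p.det) :
    Function.Bijective (phiMap c p) := by
  refine Function.bijective_iff_has_inverse.2
    ⟨phiMap c⁻¹ ((↑c⁻¹ : M₂) * p⁻¹ * c), fun z => ?_, fun z => ?_⟩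
  · rw [phiMap_comp]
    simp [mul_assoc, nonsing_inv_mul_cancel_left _ _ hp, phiMap_one_one]
  · rw [phiMap_comp]
    simp [mul_assoc, mul_nonsing_inv_cancel_left _ _ hp, phiMap_one_one]

theorem phiMap_image_setOf_snd_eq_zero (c : GL (Fin 2) F) (p : M₂) :
    phiMap c p '' {z | z.2 = 0} = {z | z.2 = 0} := by
  refine Set.Subset.antisymm ?_ ?_
  · rintro _ ⟨z, hz, rfl⟩
    simp [phiMap, show z.2 = 0 from hz]
  · rintro ⟨x, y⟩ (rfl : y = 0)
    refine ⟨phiMap c⁻¹ 1 (x, 0), by simp [phiMap], ?_⟩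
    rw [phiMap_comp]
    simp [phiMap]

theorem phiMap_cmul (c : GL (Fin 2) F) {p : M₂} (hp : p.det = 1) (a b : Cayley F) :
    phiMap c p (cmul a b) = cmul (phiMap c p a) (phiMap c p b) := by
  have hp' : ∀ X : M₂, p.adjugate * (p * X) = X := fun X => by
    rw [← mul_assoc, adjugate_mul, hp, one_smul, one_mul]
  simp only [phiMap, cmul, adjugate_mul_distrib p, adjugate_units_conj, Prod.mk.injEq]
  constructor <;> simp only [mul_add, add_mul, mul_assoc, Units.inv_mul_cancel_left, hp']

/-- For `c ∈ GL₂(F)` and `p` of determinant one, `φ_{c,p}` is an `F`-algebra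
automorphism of the split Cayley algebra stabilizing the subspace `M₂(F) × {0}`. -/
theorem phiMap_is_automorphism (c : GL (Fin 2) F) (p : Matrix (Fin 2) (Fin 2) F)
    (hp : p.det = 1) :
    Function.Bijective (phiMap c p) ∧
    (∀ a b : Cayley F, phiMap c p (a + b) = phiMap c p a + phiMap c p b) ∧
    (∀ (r : F) (a : Cayley F), phiMap c p (r • a) = r • phiMap c p a) ∧
    (∀ a b : Cayley F, phiMap c p (cmul a b) = cmul (phiMap c p a) (phiMap c p b)) ∧
    (phiMap c p) '' {z : Cayley F | z.2 = 0} = {z : Cayley F | z.2 = 0} :=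
  ⟨phiMap_bijective c (hp ▸ isUnit_one), phiMap_add c p, phiMap_smul c p, phiMap_cmul c hp,
    phiMap_image_setOf_snd_eq_zero c p⟩
end

section
/- Let F be a field and C the split Cayley algebra over F. For every t ∈ F, the maps u_α(t) and u_{−α}(t) are F-algebra automorphisms of C, and they are one-parameter subgroups: u_α(s) ∘ u_α(t) = u_α(s + t) and u_{−α}(s) ∘ u_{−α}(t) = u_{−α}(s + t) for all s, t ∈ F; in particular u_α(0) = id and u_α(t)⁻¹ = u_α(−t), and similarly for u_{−α}. -/
open Matrix

variable {F : Type*} [Field F]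

/-- The root map `u_α(t) (x | y) = (V(t)·x·V(t)⁻¹ | y·V(−t))` with `V(t) = [[1,t],[0,1]]`. -/
def uA (t : F) (z : Cayley F) : Cayley F :=
  (!![1, t; 0, 1] * z.1 * !![1, -t; 0, 1], z.2 * !![1, -t; 0, 1])

/-- The root map `u_{−α}(t) (x | y) = (W(t)·x·W(t)⁻¹ | y·W(−t))` with `W(t) = [[1,0],[t,1]]`. -/
def uMA (t : F) (z : Cayley F) : Cayley F :=
  (!![1, 0; t, 1] * z.1 * !![1, 0; -t, 1], z.2 * !![1, 0; -t, 1])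

lemma uA_comp (s t : F) : uA (F := F) s ∘ uA t = uA (s + t) := by
  funext z
  refine Prod.ext ?_ ?_ <;>
  · ext i j
    fin_cases i <;> fin_cases j <;>
      simp [uA, Matrix.mul_apply, Matrix.vecMul, dotProduct, Matrix.vecHead, Matrix.vecTail, Fin.sum_univ_two] <;> ring

lemma uMA_comp (s t : F) : uMA (F := F) s ∘ uMA t = uMA (s + t) := by
  funext z
  refine Prod.ext ?_ ?_ <;>
  · ext i j
    fin_cases i <;> fin_cases j <;>
      simp [uMA, Matrix.mul_apply, Matrix.vecMul, dotProduct, Matrix.vecHead, Matrix.vecTail, Fin.sum_univ_two] <;> ring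

lemma uA_zero : uA (F := F) 0 = id := by
  funext z
  refine Prod.ext ?_ ?_ <;>
  · ext i j
    fin_cases i <;> fin_cases j <;>
      simp [uA, Matrix.mul_apply, Matrix.vecMul, dotProduct, Matrix.vecHead, Matrix.vecTail, Fin.sum_univ_two]

lemma uMA_zero : uMA (F := F) 0 = id := by
  funext z
  refine Prod.ext ?_ ?_ <;>
  · ext i j
    fin_cases i <;> fin_cases j <;>
      simp [uMA, Matrix.mul_apply, Matrix.vecMul, dotProduct, Matrix.vecHead, Matrix.vecTail, Fin.sum_univ_two]

set_option maxHeartbeats 2000000 in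
lemma uA_mul (t : F) (a b : Cayley F) : uA t (cmul a b) = cmul (uA t a) (uA t b) := by
  refine Prod.ext ?_ ?_ <;>
  · ext i j
    fin_cases i <;> fin_cases j <;>
      simp [uA, cmul, Matrix.mul_apply, Matrix.vecMul, dotProduct, Matrix.vecHead, Matrix.vecTail, Fin.sum_univ_two, Matrix.vecMul, dotProduct, Matrix.vecHead, Matrix.vecTail, Matrix.adjugate_fin_two] <;> ring

lemma uMA_mul (t : F) (a b : Cayley F) : uMA t (cmul a b) = cmul (uMA t a) (uMA t b) := by
  refine Prod.ext ?_ ?_ <;>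
  · ext i j
    fin_cases i <;> fin_cases j <;>
      simp [uMA, cmul, Matrix.mul_apply, Matrix.vecMul, dotProduct, Matrix.vecHead, Matrix.vecTail, Fin.sum_univ_two, Matrix.vecMul, dotProduct, Matrix.vecHead, Matrix.vecTail, Matrix.adjugate_fin_two] <;> ring

lemma uA_addl (t : F) (a b : Cayley F) : uA t (a + b) = uA t a + uA t b := by
  refine Prod.ext ?_ ?_ <;>
  · ext i j
    fin_cases i <;> fin_cases j <;>
      simp [uA, uMA, Matrix.mul_apply, Matrix.vecMul, dotProduct, Matrix.vecHead, Matrix.vecTail, Fin.sum_univ_two, Matrix.smul_apply, mul_add, add_mul] <;> ring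

lemma uMA_addl (t : F) (a b : Cayley F) : uMA t (a + b) = uMA t a + uMA t b := by
  refine Prod.ext ?_ ?_ <;>
  · ext i j
    fin_cases i <;> fin_cases j <;>
      simp [uA, uMA, Matrix.mul_apply, Matrix.vecMul, dotProduct, Matrix.vecHead, Matrix.vecTail, Fin.sum_univ_two, Matrix.smul_apply, mul_add, add_mul] <;> ring

lemma uA_smul (t r : F) (a : Cayley F) : uA t (r • a) = r • uA t a := by
  refine Prod.ext ?_ ?_ <;>
  · ext i j
    fin_cases i <;> fin_cases j <;>
      simp [uA, uMA, Matrix.mul_apply, Matrix.vecMul, dotProduct, Matrix.vecHead, Matrix.vecTail, Fin.sum_univ_two, Matrix.smul_apply, mul_add, add_mul] <;> ring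

lemma uMA_smul (t r : F) (a : Cayley F) : uMA t (r • a) = r • uMA t a := by
  refine Prod.ext ?_ ?_ <;>
  · ext i j
    fin_cases i <;> fin_cases j <;>
      simp [uA, uMA, Matrix.mul_apply, Matrix.vecMul, dotProduct, Matrix.vecHead, Matrix.vecTail, Fin.sum_univ_two, Matrix.smul_apply, mul_add, add_mul] <;> ring

lemma uA_inv (t : F) : uA (F := F) t ∘ uA (-t) = id := by
  rw [uA_comp, add_neg_cancel, uA_zero]

lemma uMA_inv (t : F) : uMA (F := F) t ∘ uMA (-t) = id := by
  rw [uMA_comp, add_neg_cancel, uMA_zero]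

lemma uA_bij (t : F) : Function.Bijective (uA (F := F) t) := by
  refine Function.bijective_iff_has_inverse.mpr ⟨uA (-t), fun z => ?_, fun z => ?_⟩
  · have := congrFun (uA_inv (F := F) (-t)) z
    simpa [neg_neg] using this
  · exact congrFun (uA_inv (F := F) t) z

lemma uMA_bij (t : F) : Function.Bijective (uMA (F := F) t) := by
  refine Function.bijective_iff_has_inverse.mpr ⟨uMA (-t), fun z => ?_, fun z => ?_⟩
  · have := congrFun (uMA_inv (F := F) (-t)) z
    simpa [neg_neg] using this
  · exact congrFun (uMA_inv (F := F) t) z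

/-- `u_α` and `u_{−α}` are one-parameter groups of algebra automorphisms of the split
Cayley algebra. -/
theorem uA_one_parameter_automorphisms :
    (∀ t : F,
      Function.Bijective (uA (F := F) t) ∧
      (∀ a b : Cayley F, uA t (a + b) = uA t a + uA t b) ∧
      (∀ (r : F) (a : Cayley F), uA t (r • a) = r • uA t a) ∧
      (∀ a b : Cayley F, uA t (cmul a b) = cmul (uA t a) (uA t b))) ∧
    (∀ t : F,
      Function.Bijective (uMA (F := F) t) ∧
      (∀ a b : Cayley F, uMA t (a + b) = uMA t a + uMA t b) ∧
      (∀ (r : F) (a : Cayley F), uMA t (r • a) = r • uMA t a) ∧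
      (∀ a b : Cayley F, uMA t (cmul a b) = cmul (uMA t a) (uMA t b))) ∧
    (∀ s t : F, uA (F := F) s ∘ uA t = uA (s + t)) ∧
    (∀ s t : F, uMA (F := F) s ∘ uMA t = uMA (s + t)) ∧
    (uA (F := F) 0 = id) ∧ (uMA (F := F) 0 = id) ∧
    (∀ t : F, uA (F := F) t ∘ uA (-t) = id) ∧
    (∀ t : F, uMA (F := F) t ∘ uMA (-t) = id) := by
  exact ⟨fun t => ⟨uA_bij t, uA_addl t, fun r a => uA_smul t r a, uA_mul t⟩,
    fun t => ⟨uMA_bij t, uMA_addl t, fun r a => uMA_smul t r a, uMA_mul t⟩,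
    uA_comp, uMA_comp, uA_zero, uMA_zero, uA_inv, uMA_inv⟩
end

section
/- Let F be a field and C the split Cayley algebra over F, with bilinear form ⟨c, d⟩ = N(c+d) − N(c) − N(d), and set x₀ = (E₂₁ | 0), w₀ = (0 | E₁₁), x₀' = (−E₁₂ | 0), w₀' = (0 | E₂₂), where for a, b ∈ C the map L_{a,b} : C → C is L_{a,b}(c) = ⟨c, a⟩·b − ⟨c, b⟩·a. Then for every t ∈ F: (i) the explicit maps u_β(t) and u_{−β}(t) satisfy u_β(t)(c) = c + t·L_{w₀,x₀}(c) and u_{−β}(t)(c) = c + t·L_{w₀',x₀'}(c) for all c ∈ C; (ii) u_β(t) and u_{−β}(t) are F-algebra automorphisms of C; and (iii) u_β(s) ∘ u_β(t) = u_β(s+t) and u_{−β}(s) ∘ u_{−β}(t) = u_{−β}(s+t) for all s, t ∈ F. -/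
open Matrix

variable {F : Type*} [Field F]

/-- The norm `N (x | y) = det x - det y` of the split Cayley algebra. -/
def cnorm (a : Cayley F) : F := (a.1).det - (a.2).det

/-- The bilinear form `⟨c, d⟩ = N(c+d) - N c - N d` on the split Cayley algebra. -/
def bform (c d : Cayley F) : F := cnorm (c + d) - cnorm c - cnorm d

/-- `L_{a,b}(c) = ⟨c,a⟩·b - ⟨c,b⟩·a`. -/
def Lab (a b c : Cayley F) : Cayley F := bform c a • b - bform c b • a

/-- The root map `u_β(t)`: it sends `(x | y)` to the pair with `x₃ ↦ x₃ − t·y₄` and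
`y₁ ↦ y₁ + t·x₂`, all other entries unchanged. -/
def uB (t : F) (z : Cayley F) : Cayley F :=
  (!![z.1 0 0, z.1 0 1; z.1 1 0 - t * z.2 1 1, z.1 1 1],
   !![z.2 0 0 + t * z.1 0 1, z.2 0 1; z.2 1 0, z.2 1 1])

/-- The root map `u_{−β}(t)`: it sends `(x | y)` to the pair with `x₂ ↦ x₂ + t·y₁` and
`y₄ ↦ y₄ − t·x₃`, all other entries unchanged. -/
def uMB (t : F) (z : Cayley F) : Cayley F :=
  (!![z.1 0 0, z.1 0 1 + t * z.2 0 0; z.1 1 0, z.1 1 1],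
   !![z.2 0 0, z.2 0 1; z.2 1 0, z.2 1 1 - t * z.1 1 0])

/-! Every identity about `u_β` is an entrywise polynomial identity. Relabelling the two
indices of both matrices is an automorphism of `C` that conjugates `u_β(-t)` into `u_{-β}(t)`,
so the automorphism and one-parameter-group properties of `u_{-β}` follow from those of `u_β`. -/

theorem Function.bijective_of_map_add {G α : Type*} [AddGroup G] (φ : G → α → α)
    (h_zero : ∀ x, φ 0 x = x) (h_add : ∀ s t x, φ s (φ t x) = φ (s + t) x) (t : G) :
    Function.Bijective (φ t) :=
  Function.bijective_iff_has_inverse.2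
    ⟨φ (-t), fun x => by rw [h_add, neg_add_cancel, h_zero],
      fun x => by rw [h_add, add_neg_cancel, h_zero]⟩

def creindex (e : Fin 2 ≃ Fin 2) (a : Cayley F) : Cayley F :=
  (a.1.submatrix e e, a.2.submatrix e e)

lemma creindex_add (e : Fin 2 ≃ Fin 2) (a b : Cayley F) :
    creindex e (a + b) = creindex e a + creindex e b := by
  simp [creindex, submatrix_add]

lemma creindex_smul (e : Fin 2 ≃ Fin 2) (r : F) (a : Cayley F) :
    creindex e (r • a) = r • creindex e a := by
  simp [creindex, submatrix_smul]

lemma creindex_cmul (e : Fin 2 ≃ Fin 2) (a b : Cayley F) :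
    creindex e (cmul a b) = cmul (creindex e a) (creindex e b) := by
  simp [creindex, cmul, submatrix_add]

lemma creindex_swap_creindex_swap (a : Cayley F) :
    creindex (Equiv.swap 0 1) (creindex (Equiv.swap 0 1) a) = a := by
  ext i j <;> fin_cases i <;> fin_cases j <;> rfl

lemma uB_eq_add_smul_Lab (t : F) (c : Cayley F) :
    uB t c = c + t • Lab ((0, single 0 0 1) : Cayley F) ((single 1 0 1, 0) : Cayley F) c := by
  ext i j <;> fin_cases i <;> fin_cases j <;>
    simp [uB, Lab, bform, cnorm, det_fin_two] <;> ring

lemma uMB_eq_add_smul_Lab (t : F) (c : Cayley F) :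
    uMB t c = c + t • Lab ((0, single 1 1 1) : Cayley F) ((-(single 0 1 1), 0) : Cayley F) c := by
  ext i j <;> fin_cases i <;> fin_cases j <;>
    simp [uMB, Lab, bform, cnorm, det_fin_two] <;> ring

lemma uB_zero (c : Cayley F) : uB 0 c = c := by
  simp [uB_eq_add_smul_Lab]

lemma uB_uB (s t : F) (c : Cayley F) : uB s (uB t c) = uB (s + t) c := by
  ext i j <;> fin_cases i <;> fin_cases j <;> simp [uB] <;> ring

lemma uB_bijective (t : F) : Function.Bijective (uB t) :=
  Function.bijective_of_map_add (G := F) (α := Cayley F) uB uB_zero uB_uB t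

lemma uB_add (t : F) (a b : Cayley F) : uB t (a + b) = uB t a + uB t b := by
  ext i j <;> fin_cases i <;> fin_cases j <;> simp [uB] <;> ring

lemma uB_smul (t r : F) (a : Cayley F) : uB t (r • a) = r • uB t a := by
  ext i j <;> fin_cases i <;> fin_cases j <;> simp [uB] <;> ring

lemma uB_cmul (t : F) (a b : Cayley F) : uB t (cmul a b) = cmul (uB t a) (uB t b) := by
  ext i j <;> fin_cases i <;> fin_cases j <;>
    simp [uB, cmul, mul_apply, Fin.sum_univ_two, adjugate_fin_two, vecMul, dotProduct] <;> ring

lemma uMB_eq_creindex_uB (t : F) (c : Cayley F) :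
    uMB t c = creindex (Equiv.swap 0 1) (uB (-t) (creindex (Equiv.swap 0 1) c)) := by
  ext i j <;> fin_cases i <;> fin_cases j <;> simp [uMB, uB, creindex]; ring

lemma uMB_zero (c : Cayley F) : uMB 0 c = c := by
  simp [uMB_eq_add_smul_Lab]

lemma uMB_uMB (s t : F) (c : Cayley F) : uMB s (uMB t c) = uMB (s + t) c := by
  simp only [uMB_eq_creindex_uB, creindex_swap_creindex_swap, uB_uB, neg_add]

lemma uMB_bijective (t : F) : Function.Bijective (uMB t) :=
  Function.bijective_of_map_add (G := F) (α := Cayley F) uMB uMB_zero uMB_uMB t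

lemma uMB_add (t : F) (a b : Cayley F) : uMB t (a + b) = uMB t a + uMB t b := by
  simp only [uMB_eq_creindex_uB, creindex_add, uB_add]

lemma uMB_smul (t r : F) (a : Cayley F) : uMB t (r • a) = r • uMB t a := by
  simp only [uMB_eq_creindex_uB, creindex_smul, uB_smul]

lemma uMB_cmul (t : F) (a b : Cayley F) : uMB t (cmul a b) = cmul (uMB t a) (uMB t b) := by
  simp only [uMB_eq_creindex_uB, creindex_cmul, uB_cmul]

/-- The long-root maps `u_β(t)` and `u_{−β}(t)`: they are given by
`c ↦ c + t·L_{w₀,x₀}(c)` (resp. `c ↦ c + t·L_{w₀',x₀'}(c)`), they are algebra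
automorphisms of the split Cayley algebra, and they are one-parameter groups. -/
theorem uB_one_parameter_automorphisms :
    (∀ (t : F) (c : Cayley F),
      uB t c = c + t • Lab ((0, single 0 0 (1 : F)) : Cayley F)
        ((single 1 0 (1 : F), 0) : Cayley F) c) ∧
    (∀ (t : F) (c : Cayley F),
      uMB t c = c + t • Lab ((0, single 1 1 (1 : F)) : Cayley F)
        ((-(single 0 1 (1 : F)), 0) : Cayley F) c) ∧
    (∀ t : F,
      Function.Bijective (uB (F := F) t) ∧
      (∀ a b : Cayley F, uB t (a + b) = uB t a + uB t b) ∧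
      (∀ (r : F) (a : Cayley F), uB t (r • a) = r • uB t a) ∧
      (∀ a b : Cayley F, uB t (cmul a b) = cmul (uB t a) (uB t b))) ∧
    (∀ t : F,
      Function.Bijective (uMB (F := F) t) ∧
      (∀ a b : Cayley F, uMB t (a + b) = uMB t a + uMB t b) ∧
      (∀ (r : F) (a : Cayley F), uMB t (r • a) = r • uMB t a) ∧
      (∀ a b : Cayley F, uMB t (cmul a b) = cmul (uMB t a) (uMB t b))) ∧
    (∀ s t : F, uB (F := F) s ∘ uB t = uB (s + t)) ∧
    (∀ s t : F, uMB (F := F) s ∘ uMB t = uMB (s + t)) := by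
  exact ⟨uB_eq_add_smul_Lab, uMB_eq_add_smul_Lab,
    fun t => ⟨uB_bijective t, uB_add t, uB_smul t, uB_cmul t⟩,
    fun t => ⟨uMB_bijective t, uMB_add t, uMB_smul t, uMB_cmul t⟩,
    fun s t => funext (uB_uB s t), fun s t => funext (uMB_uMB s t)⟩
end

section
/- Let F be a field and C the split Cayley algebra over F. Define n_α = u_α(1) ∘ u_{−α}(−1) ∘ u_α(1). Then: (i) n_α((x | y)) = (s·x·s⁻¹ | y·s) for all (x | y) ∈ C, where s = [[0,−1],[1,0]]; (ii) n_α ∘ n_α = γ(−1,−1); and (iii) n_α ∘ γ(λ₁,λ₂) ∘ n_α⁻¹ = γ(λ₂,λ₁) for all λ₁, λ₂ ∈ Fˣ. -/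
open Matrix

variable {F : Type*} [Field F]

/-- The torus element `γ(λ₁,λ₂)` of `G₂ = Aut(C)`:
`γ(λ₁,λ₂) (x | y) = (a(λ₁,λ₂)·x·a(λ₁,λ₂)⁻¹ | a(λ₂,λ₂⁻¹)·a(λ₁,λ₂)·y·a(λ₁,λ₂)⁻¹)`,
where `a(λ₁,λ₂) = diag(λ₁,λ₂)`. -/
def gammaMap (l1 l2 : Fˣ) (z : Cayley F) : Cayley F :=
  (diagonal ![(l1 : F), (l2 : F)] * z.1 * diagonal ![((l1⁻¹ : Fˣ) : F), ((l2⁻¹ : Fˣ) : F)],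
   diagonal ![(l2 : F), ((l2⁻¹ : Fˣ) : F)] *
     (diagonal ![(l1 : F), (l2 : F)] * z.2 * diagonal ![((l1⁻¹ : Fˣ) : F), ((l2⁻¹ : Fˣ) : F)]))

/-- The Weyl representative `n_α = u_α(1) ∘ u_{−α}(−1) ∘ u_α(1)`. -/
def nA : Cayley F → Cayley F := uA 1 ∘ uMA (-1) ∘ uA 1


private lemma nA_formula (z : Cayley F) :
    nA z = (!![0, -1; 1, 0] * z.1 * !![0, 1; -1, 0], z.2 * !![0, -1; 1, 0]) := by
  obtain ⟨x, y⟩ := z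
  simp only [nA, uA, uMA, Function.comp_apply]
  refine Prod.ext ?_ ?_ <;>
  · ext i j
    fin_cases i <;> fin_cases j <;>
      simp [Matrix.mul_apply, Matrix.vecMul, Matrix.vecHead, Matrix.vecTail, dotProduct, Fin.sum_univ_two] <;> ring

private def nAInv (z : Cayley F) : Cayley F :=
  (!![0, 1; -1, 0] * z.1 * !![0, -1; 1, 0], z.2 * !![0, 1; -1, 0])

private lemma nA_left : Function.LeftInverse (nAInv (F := F)) nA := by
  intro z
  rw [nA_formula]
  obtain ⟨x, y⟩ := z
  simp only [nAInv]
  refine Prod.ext ?_ ?_ <;>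
  · ext i j
    fin_cases i <;> fin_cases j <;>
      simp [Matrix.mul_apply, Matrix.vecMul, Matrix.vecHead, Matrix.vecTail, dotProduct, Fin.sum_univ_two]

private lemma nA_right : Function.RightInverse (nAInv (F := F)) nA := by
  intro z
  rw [nA_formula]
  obtain ⟨x, y⟩ := z
  simp only [nAInv]
  refine Prod.ext ?_ ?_ <;>
  · ext i j
    fin_cases i <;> fin_cases j <;>
      simp [Matrix.mul_apply, Matrix.vecMul, Matrix.vecHead, Matrix.vecTail, dotProduct, Fin.sum_univ_two]

private lemma invFun_nA : Function.invFun (nA (F := F)) = nAInv :=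
  Function.invFun_eq_of_injective_of_rightInverse nA_left.injective nA_right

/-- Properties of the Weyl group representative `n_α`: the explicit formula
`n_α (x | y) = (s·x·s⁻¹ | y·s)` with `s = [[0,−1],[1,0]]`, the relation
`n_α² = γ(−1,−1)`, and `n_α γ(λ₁,λ₂) n_α⁻¹ = γ(λ₂,λ₁)`. -/
theorem nA_properties :
    (∀ z : Cayley F,
      nA z = (!![0, -1; 1, 0] * z.1 * !![0, 1; -1, 0], z.2 * !![0, -1; 1, 0])) ∧
    (nA (F := F) ∘ nA = gammaMap (-1) (-1)) ∧
    (∀ l1 l2 : Fˣ,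
      nA (F := F) ∘ gammaMap l1 l2 ∘ Function.invFun (nA (F := F)) = gammaMap l2 l1) := by
  refine ⟨nA_formula, ?_, ?_⟩
  · funext z
    obtain ⟨x, y⟩ := z
    simp only [Function.comp_apply, nA_formula, gammaMap]
    refine Prod.ext ?_ ?_ <;>
    · ext i j
      fin_cases i <;> fin_cases j <;>
        simp [Matrix.mul_apply, Matrix.vecMul, Matrix.vecHead, Matrix.vecTail, dotProduct, Fin.sum_univ_two, Matrix.diagonal]
  · intro l1 l2
    funext z
    obtain ⟨x, y⟩ := z
    have h1 : ((l1⁻¹ : Fˣ) : F) = (l1 : F)⁻¹ := by simp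
    have h2 : ((l2⁻¹ : Fˣ) : F) = (l2 : F)⁻¹ := by simp
    have n1 : (l1 : F) ≠ 0 := l1.ne_zero
    have n2 : (l2 : F) ≠ 0 := l2.ne_zero
    simp only [Function.comp_apply, invFun_nA, nAInv, nA_formula, gammaMap, h1, h2]
    refine Prod.ext ?_ ?_ <;>
    · ext i j
      fin_cases i <;> fin_cases j <;>
        simp [Matrix.mul_apply, Matrix.vecMul, Matrix.vecHead, Matrix.vecTail, dotProduct, Fin.sum_univ_two, Matrix.diagonal] <;>
        field_simp
end

section
/- Let F be a field and C the split Cayley algebra over F. Define n_β = u_β(1) ∘ u_{−β}(−1) ∘ u_β(1). Then: (i) for all (x | y) ∈ C with x = [[x₁,x₂],[x₃,x₄]] and y = [[y₁,y₂],[y₃,y₄]], n_β((x | y)) = ([[x₁, −y₁],[−y₄, x₄]] | [[x₂, y₂],[y₃, x₃]]); (ii) n_β ∘ n_β = γ(1,−1); and (iii) n_β ∘ γ(λ₁,λ₂) ∘ n_β⁻¹ = γ(λ₁, λ₁λ₂⁻¹) for all λ₁, λ₂ ∈ Fˣ. -/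
open Matrix

variable {F : Type*} [Field F]

/-- The Weyl representative `n_β = u_β(1) ∘ u_{−β}(−1) ∘ u_β(1)`. -/
def nB : Cayley F → Cayley F := uB 1 ∘ uMB (-1) ∘ uB 1


lemma nB_formula (z : Cayley F) :
    nB z = (!![z.1 0 0, -(z.2 0 0); -(z.2 1 1), z.1 1 1],
            !![z.1 0 1, z.2 0 1; z.2 1 0, z.1 1 0]) := by
  simp only [nB, Function.comp, uB, uMB]
  refine Prod.ext ?_ ?_ <;> ext i j <;> fin_cases i <;> fin_cases j <;> simp

lemma nB_nB (z : Cayley F) : nB (nB z) = gammaMap 1 (-1) z := by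
  rw [nB_formula, nB_formula, gammaMap]
  refine Prod.ext ?_ ?_ <;> ext i j <;> fin_cases i <;> fin_cases j <;>
    simp [Matrix.mul_apply, Fin.sum_univ_two]

lemma nB_inv : Function.LeftInverse (nB (F := F) ∘ nB ∘ nB) nB ∧
    Function.RightInverse (nB (F := F) ∘ nB ∘ nB) nB := by
  constructor <;> intro z <;>
    simp only [Function.comp, nB_nB] <;>
    rw [gammaMap, gammaMap] <;>
    refine Prod.ext ?_ ?_ <;> ext i j <;> fin_cases i <;> fin_cases j <;>
    simp [Matrix.mul_apply, Fin.sum_univ_two]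

lemma nB_gamma (l1 l2 : Fˣ) (w : Cayley F) :
    nB (gammaMap l1 l2 w) = gammaMap l1 (l1 * l2⁻¹) (nB w) := by
  rw [nB_formula, nB_formula, gammaMap, gammaMap]
  have h1 : (l1 : F) ≠ 0 := l1.ne_zero
  have h2 : (l2 : F) ≠ 0 := l2.ne_zero
  refine Prod.ext ?_ ?_ <;> ext i j <;> fin_cases i <;> fin_cases j <;>
    simp [Matrix.mul_apply, Fin.sum_univ_two, Units.val_inv_eq_inv_val] <;>
    field_simp <;> ring

/-- Properties of the Weyl group representative `n_β`: the explicit formula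
`n_β (x | y) = ([[x₁,−y₁],[−y₄,x₄]] | [[x₂,y₂],[y₃,x₃]])`, the relation
`n_β² = γ(1,−1)`, and `n_β γ(λ₁,λ₂) n_β⁻¹ = γ(λ₁, λ₁λ₂⁻¹)`. -/
theorem nB_properties :
    (∀ z : Cayley F,
      nB z = (!![z.1 0 0, -(z.2 0 0); -(z.2 1 1), z.1 1 1],
              !![z.1 0 1, z.2 0 1; z.2 1 0, z.1 1 0])) ∧
    (nB (F := F) ∘ nB = gammaMap 1 (-1)) ∧
    (∀ l1 l2 : Fˣ,
      nB (F := F) ∘ gammaMap l1 l2 ∘ Function.invFun (nB (F := F)) =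
        gammaMap l1 (l1 * l2⁻¹)) := by
  refine ⟨nB_formula, funext nB_nB, fun l1 l2 => funext fun z => ?_⟩
  have hs : Function.Surjective (nB (F := F)) := nB_inv.2.surjective
  have hz : nB (Function.invFun (nB (F := F)) z) = z :=
    Function.rightInverse_invFun hs z
  calc (nB (F := F) ∘ gammaMap l1 l2 ∘ Function.invFun (nB (F := F))) z
      = nB (gammaMap l1 l2 (Function.invFun (nB (F := F)) z)) := rfl
    _ = gammaMap l1 (l1 * l2⁻¹) (nB (Function.invFun (nB (F := F)) z)) := nB_gamma ..
    _ = gammaMap l1 (l1 * l2⁻¹) z := by rw [hz]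
end

section
/- Let F be a field and C the split Cayley algebra over F. Let s = [[0,−1],[1,0]] and define w_G : C → C by w_G((x | y)) = (s·x·s⁻¹ | s·y·s⁻¹). Then w_G is an F-algebra automorphism of C, and conjugation by w_G inverts the torus: w_G ∘ γ(λ₁,λ₂) ∘ w_G⁻¹ = γ(λ₁⁻¹, λ₂⁻¹) for all λ₁, λ₂ ∈ Fˣ. -/
open Matrix

variable {F : Type*} [Field F]

/-- The longest Weyl element representative `w_G (x | y) = (s·x·s⁻¹ | s·y·s⁻¹)` with
`s = [[0,−1],[1,0]]`. -/
def wG (z : Cayley F) : Cayley F :=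
  (!![0, -1; 1, 0] * z.1 * !![0, 1; -1, 0], !![0, -1; 1, 0] * z.2 * !![0, 1; -1, 0])


lemma diag2 (a b : F) : (diagonal ![a, b] : Matrix (Fin 2) (Fin 2) F) = !![a, 0; 0, b] := by
  ext i j; fin_cases i <;> fin_cases j <;> simp [diagonal]

lemma wG_invol : Function.Involutive (wG (F := F)) := by
  intro z
  simp only [wG]
  rw [Prod.ext_iff]
  simp only [Matrix.mul_fin_two]
  constructor <;>
  · first
    | rw [Matrix.eta_fin_two (Prod.fst z)]
    | rw [Matrix.eta_fin_two (Prod.snd z)]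
    simp only [Matrix.mul_fin_two]
    ext i j
    fin_cases i <;> fin_cases j <;> simp <;> ring

lemma wG_mul (a b : Cayley F) : wG (cmul a b) = cmul (wG a) (wG b) := by
  simp only [wG, cmul]
  rw [Matrix.eta_fin_two a.1, Matrix.eta_fin_two a.2, Matrix.eta_fin_two b.1,
    Matrix.eta_fin_two b.2]
  simp only [Matrix.mul_fin_two, Matrix.adjugate_fin_two_of, Prod.mk.injEq]
  constructor <;>
  · ext i j
    fin_cases i <;> fin_cases j <;> simp <;> ring

lemma wG_gamma (l1 l2 : Fˣ) (z : Cayley F) :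
    wG (gammaMap l1 l2 (wG z)) = gammaMap l1⁻¹ l2⁻¹ z := by
  simp only [wG, gammaMap, diag2]
  rw [Matrix.eta_fin_two z.1, Matrix.eta_fin_two z.2]
  simp only [Matrix.mul_fin_two, Prod.mk.injEq, Units.val_inv_eq_inv_val]
  constructor <;>
  · ext i j
    fin_cases i <;> fin_cases j <;> simp <;> field_simp <;> ring

lemma wG_invFun_eq (z : Cayley F) : Function.invFun (wG (F := F)) z = wG z :=
  wG_invol.injective (by rw [Function.invFun_eq ⟨wG z, wG_invol z⟩, wG_invol z])

/-- `w_G` is an algebra automorphism of the split Cayley algebra and conjugation by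
`w_G` inverts the torus: `w_G γ(λ₁,λ₂) w_G⁻¹ = γ(λ₁⁻¹,λ₂⁻¹)`. -/
theorem wG_automorphism_inverts_torus :
    Function.Bijective (wG (F := F)) ∧
    (∀ a b : Cayley F, wG (a + b) = wG a + wG b) ∧
    (∀ (r : F) (a : Cayley F), wG (r • a) = r • wG a) ∧
    (∀ a b : Cayley F, wG (cmul a b) = cmul (wG a) (wG b)) ∧
    (∀ l1 l2 : Fˣ,
      wG (F := F) ∘ gammaMap l1 l2 ∘ Function.invFun (wG (F := F)) =
        gammaMap l1⁻¹ l2⁻¹) := by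
  refine ⟨wG_invol.bijective, ?_, ?_, wG_mul, ?_⟩
  · intro a b
    simp only [wG, Prod.fst_add, Prod.snd_add, Matrix.mul_add, Matrix.add_mul,
      Prod.mk_add_mk]
  · intro r a
    simp only [wG, Prod.smul_fst, Prod.smul_snd, Matrix.mul_smul, Matrix.smul_mul,
      Prod.smul_mk]
  · intro l1 l2
    funext z
    simp only [Function.comp_apply, wG_invFun_eq]
    exact wG_gamma l1 l2 z
end

section
/- Let F be a field and C the split Cayley algebra over F, with bilinear form ⟨c, d⟩ = N(c+d) − N(c) − N(d), and for a, b ∈ C let L_{a,b} : C → C be L_{a,b}(c) = ⟨c, a⟩·b − ⟨c, b⟩·a. Set x₀ = (E₂₁ | 0), w₀ = (0 | E₁₁), x₀' = (−E₁₂ | 0), w₀' = (0 | E₂₂). Then D_β = L_{w₀,x₀} and D_{−β} = L_{w₀',x₀'} are derivations of C: D(c·d) = D(c)·d + c·D(d) for all c, d ∈ C, for D ∈ {D_β, D_{−β}}. -/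
/-!
Since `⟨c, w₀⟩ = -y₂₂` and `⟨c, x₀⟩ = -x₁₂` for `c = (x | y)`, the map `D_β` is
`(x | y) ↦ (-y₂₂ E₂₁ | x₁₂ E₁₁)`, and the derivation identity for it is an entrywise polynomial
identity. For `D_{-β}` no computation is needed: conjugating both components by `g ∈ GL₂(F)` is
an automorphism of `C` (as `adj (g y g⁻¹) = g (adj y) g⁻¹`) preserving the norm, hence it
carries `L_{a,b}` to `L_{ga,gb}` and derivations to derivations, and the Weyl element
`[[0, 1], [-1, 0]]` sends `x₀ ↦ x₀'` and `w₀ ↦ w₀'`.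
-/

open Matrix

variable {F : Type*} [Field F]

theorem Matrix.adjugate_units_conj_s17 {n R : Type*} [Fintype n] [DecidableEq n] [CommRing R]
    (g : (Matrix n n R)ˣ) (y : Matrix n n R) :
    adjugate ((g : Matrix n n R) * y * (↑g⁻¹ : Matrix n n R)) =
      g * adjugate y * (↑g⁻¹ : Matrix n n R) := by
  have adjugate_units (u : (Matrix n n R)ˣ) :
      adjugate (u : Matrix n n R) = det (u : Matrix n n R) • ↑u⁻¹ :=
    calc adjugate (u : Matrix n n R) = ↑u⁻¹ * (↑u * adjugate (u : Matrix n n R)) := by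
          rw [← mul_assoc, Units.inv_mul, one_mul]
      _ = det (u : Matrix n n R) • ↑u⁻¹ := by rw [mul_adjugate, mul_smul_comm, mul_one]
  have det_mul_det_inv : det (g : Matrix n n R) * det (↑g⁻¹ : Matrix n n R) = 1 := by
    rw [← det_mul, Units.mul_inv, det_one]
  rw [adjugate_mul_distrib, adjugate_mul_distrib, adjugate_units, adjugate_units, inv_inv]
  simp only [smul_mul_assoc, mul_smul_comm, smul_smul, det_mul_det_inv, one_smul, mul_assoc]

namespace Cayley

def IsDerivation (D : Cayley F → Cayley F) : Prop :=
  ∀ c d, D (cmul c d) = cmul (D c) d + cmul c (D d)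

def conjBy (g : (Matrix (Fin 2) (Fin 2) F)ˣ) (c : Cayley F) : Cayley F :=
  ((g : Matrix (Fin 2) (Fin 2) F) * c.1 * (↑g⁻¹ : Matrix (Fin 2) (Fin 2) F),
    (g : Matrix (Fin 2) (Fin 2) F) * c.2 * (↑g⁻¹ : Matrix (Fin 2) (Fin 2) F))

section conjBy

variable (g : (Matrix (Fin 2) (Fin 2) F)ˣ)

theorem conjBy_add (a b : Cayley F) : conjBy g (a + b) = conjBy g a + conjBy g b := by
  simp only [conjBy, Prod.fst_add, Prod.snd_add, mul_add, add_mul, Prod.mk_add_mk]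

theorem conjBy_sub (a b : Cayley F) : conjBy g (a - b) = conjBy g a - conjBy g b := by
  simp only [conjBy, Prod.fst_sub, Prod.snd_sub, mul_sub, sub_mul, Prod.mk_sub_mk]

theorem conjBy_smul (r : F) (a : Cayley F) : conjBy g (r • a) = r • conjBy g a := by
  simp only [conjBy, Prod.smul_fst, Prod.smul_snd, mul_smul_comm, smul_mul_assoc, Prod.smul_mk]

theorem conjBy_inv_conjBy (a : Cayley F) : conjBy g⁻¹ (conjBy g a) = a := by
  simp only [conjBy, inv_inv, mul_assoc, Units.inv_mul_cancel_left, Units.inv_mul, mul_one]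

theorem conjBy_conjBy_inv (a : Cayley F) : conjBy g (conjBy g⁻¹ a) = a := by
  simpa using conjBy_inv_conjBy g⁻¹ a

theorem cmul_conjBy (a b : Cayley F) :
    cmul (conjBy g a) (conjBy g b) = conjBy g (cmul a b) := by
  simp only [cmul, conjBy, adjugate_units_conj_s17, Prod.mk.injEq]
  constructor <;> simp only [mul_add, add_mul, mul_assoc, Units.inv_mul_cancel_left]

theorem cnorm_conjBy (a : Cayley F) : cnorm (conjBy g a) = cnorm a := by
  simp only [cnorm, conjBy, det_units_conj]

theorem bform_conjBy (a b : Cayley F) : bform (conjBy g a) (conjBy g b) = bform a b := by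
  simp only [bform, ← conjBy_add, cnorm_conjBy]

theorem Lab_conjBy (a b c : Cayley F) :
    Lab (conjBy g a) (conjBy g b) (conjBy g c) = conjBy g (Lab a b c) := by
  simp only [Lab, bform_conjBy, conjBy_sub, conjBy_smul]

theorem Lab_conjBy_eq (a b : Cayley F) :
    Lab (conjBy g a) (conjBy g b) = fun c => conjBy g (Lab a b (conjBy g⁻¹ c)) := by
  funext c
  rw [← Lab_conjBy, conjBy_conjBy_inv]

theorem IsDerivation.conj {D : Cayley F → Cayley F} (hD : IsDerivation D) :
    IsDerivation (fun c => conjBy g (D (conjBy g⁻¹ c))) := by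
  intro c d
  obtain ⟨c, rfl⟩ : ∃ c', c = conjBy g c' := ⟨_, (conjBy_conjBy_inv g c).symm⟩
  obtain ⟨d, rfl⟩ : ∃ d', d = conjBy g d' := ⟨_, (conjBy_conjBy_inv g d).symm⟩
  simp only [conjBy_inv_conjBy, ← cmul_conjBy, hD c d, conjBy_add]

end conjBy

-- Matrix indices are 0-based: `single 1 0 1` is `E₂₁`.
def x₀ : Cayley F := (single 1 0 1, 0)
def w₀ : Cayley F := (0, single 0 0 1)
def x₀' : Cayley F := (-(single 0 1 1), 0)
def w₀' : Cayley F := (0, single 1 1 1)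

def Dβ (c : Cayley F) : Cayley F := (single 1 0 (-c.2 1 1), single 0 0 (c.1 0 1))

theorem bform_w₀ (c : Cayley F) : bform c w₀ = -c.2 1 1 := by
  simp [bform, cnorm, w₀, det_fin_two, add_mul]

theorem bform_x₀ (c : Cayley F) : bform c x₀ = -c.1 0 1 := by
  simp [bform, cnorm, x₀, det_fin_two, mul_add]

theorem Lab_w₀_x₀ : Lab (w₀ : Cayley F) x₀ = Dβ := by
  funext c
  rw [Lab, bform_w₀, bform_x₀]
  ext i j <;> fin_cases i <;> fin_cases j <;> simp [Dβ, w₀, x₀]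

theorem isDerivation_Dβ : IsDerivation (Dβ : Cayley F → Cayley F) := by
  rintro ⟨x, y⟩ ⟨x', y'⟩
  ext i j <;>
  · fin_cases i <;> fin_cases j <;>
      simp [Dβ, cmul, adjugate_fin_two, mul_apply, Fin.sum_univ_two, single_apply, vecMul,
        dotProduct] <;> ring

/-- Conjugation by this representative of the Weyl reflection `s_β` swaps the root spaces of
`β` and `-β`. -/
def weyl : (Matrix (Fin 2) (Fin 2) F)ˣ where
  val := !![0, 1; -1, 0]
  inv := !![0, -1; 1, 0]
  val_inv := by simp [Matrix.one_fin_two]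
  inv_val := by simp [Matrix.one_fin_two]

theorem conjBy_weyl_x₀ : conjBy weyl (x₀ : Cayley F) = x₀' := by
  ext i j <;> fin_cases i <;> fin_cases j <;>
    simp [conjBy, weyl, x₀, x₀', vecMul, dotProduct, Fin.sum_univ_two]

theorem conjBy_weyl_w₀ : conjBy weyl (w₀ : Cayley F) = w₀' := by
  ext i j <;> fin_cases i <;> fin_cases j <;>
    simp [conjBy, weyl, w₀, w₀', vecMul, dotProduct, Fin.sum_univ_two]

end Cayley

/-- The root vectors `D_β = L_{w₀,x₀}` and `D_{−β} = L_{w₀',x₀'}`, with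
`x₀ = (E₂₁|0)`, `w₀ = (0|E₁₁)`, `x₀' = (−E₁₂|0)`, `w₀' = (0|E₂₂)`, are derivations of
the split Cayley algebra. -/
theorem D_beta_derivations :
    (∀ c d : Cayley F,
      Lab ((0, single 0 0 1) : Cayley F) ((single 1 0 1, 0) : Cayley F)
          (cmul c d) =
        cmul (Lab (0, single 0 0 1) (single 1 0 1, 0) c) d +
        cmul c (Lab (0, single 0 0 1) (single 1 0 1, 0) d)) ∧
    (∀ c d : Cayley F,
      Lab ((0, single 1 1 1) : Cayley F) ((-(single 0 1 1), 0) : Cayley F)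
          (cmul c d) =
        cmul (Lab (0, single 1 1 1) (-(single 0 1 1), 0) c) d +
        cmul c (Lab (0, single 1 1 1) (-(single 0 1 1), 0) d)) := by
  have hβ : Cayley.IsDerivation (Lab (Cayley.w₀ : Cayley F) Cayley.x₀) := by
    rw [Cayley.Lab_w₀_x₀]
    exact Cayley.isDerivation_Dβ
  have hmβ : Cayley.IsDerivation (Lab (Cayley.w₀' : Cayley F) Cayley.x₀') := by
    rw [← Cayley.conjBy_weyl_w₀, ← Cayley.conjBy_weyl_x₀, Cayley.Lab_conjBy_eq]
    exact hβ.conj Cayley.weyl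
  exact ⟨hβ, hmβ⟩
end

section
/- Let F be a field and C the split Cayley algebra over F, with the torus maps γ(λ₁,λ₂) and the root maps u_α(t), u_β(t), u_{α+β}(t), u_{2α+β}(t), u_{3α+β}(t), u_{3α+2β}(t) defined below. Then for all λ₁, λ₂ ∈ Fˣ and t ∈ F: γ(λ₁,λ₂) ∘ u_α(t) ∘ γ(λ₁,λ₂)⁻¹ = u_α(λ₁λ₂⁻¹·t); γ(λ₁,λ₂) ∘ u_β(t) ∘ γ(λ₁,λ₂)⁻¹ = u_β(λ₂²λ₁⁻¹·t); γ(λ₁,λ₂) ∘ u_{α+β}(t) ∘ γ(λ₁,λ₂)⁻¹ = u_{α+β}(λ₂·t); γ(λ₁,λ₂) ∘ u_{2α+β}(t) ∘ γ(λ₁,λ₂)⁻¹ = u_{2α+β}(λ₁·t); γ(λ₁,λ₂) ∘ u_{3α+β}(t) ∘ γ(λ₁,λ₂)⁻¹ = u_{3α+β}(λ₁²λ₂⁻¹·t); and γ(λ₁,λ₂) ∘ u_{3α+2β}(t) ∘ γ(λ₁,λ₂)⁻¹ = u_{3α+2β}(λ₁λ₂·t). In particular, conjugation by the order-two torus element γ(1,−1)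 maps each positive root map u_δ(t) to u_δ(±t), so the involution θ = conjugation by γ(1,−1) stabilizes the standard Borel subgroup of G₂ = Aut(C). -/
open Matrix

variable {F : Type*} [Field F]

/-- The root map `u_{α+β}(t)`. -/
def uAB (t : F) (z : Cayley F) : Cayley F :=
  (!![z.1 0 0 + t * z.2 1 1, z.1 0 1;
      z.1 1 0 + t * z.2 1 0, z.1 1 1 - t * z.2 1 1],
   !![z.2 0 0 + t * (z.1 1 1 - z.1 0 0) - t ^ 2 * z.2 1 1, z.2 0 1 + t * z.1 0 1;
      z.2 1 0, z.2 1 1])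

/-- The root map `u_{2α+β}(t)`. -/
def u2AB (t : F) (z : Cayley F) : Cayley F :=
  (!![z.1 0 0 - t * z.2 1 0, z.1 0 1 + t * z.2 1 1;
      z.1 1 0, z.1 1 1 + t * z.2 1 0],
   !![z.2 0 0 - t * z.1 1 0, z.2 0 1 + t * (z.1 1 1 - z.1 0 0) + t ^ 2 * z.2 1 0;
      z.2 1 0, z.2 1 1])

/-- The root map `u_{3α+β}(t)`. -/
def u3AB (t : F) (z : Cayley F) : Cayley F :=
  (!![z.1 0 0, z.1 0 1 - t * z.2 1 0; z.1 1 0, z.1 1 1],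
   !![z.2 0 0, z.2 0 1 - t * z.1 1 0; z.2 1 0, z.2 1 1])

/-- The root map `u_{3α+2β}(t)`. -/
def u3A2B (t : F) (z : Cayley F) : Cayley F :=
  (z.1,
   !![z.2 0 0 - t * z.2 1 0, z.2 0 1 - t * z.2 1 1; z.2 1 0, z.2 1 1])


section Aux
variable {F : Type*} [Field F]

set_option maxHeartbeats 1000000 in
lemma conj_all (l1 l2 : Fˣ) (t : F) :
    (gammaMap (F := F) l1 l2 ∘ uA t ∘ gammaMap l1⁻¹ l2⁻¹ =
      uA (((l1 * l2⁻¹ : Fˣ) : F) * t)) ∧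
    (gammaMap (F := F) l1 l2 ∘ uB t ∘ gammaMap l1⁻¹ l2⁻¹ =
      uB (((l2 ^ 2 * l1⁻¹ : Fˣ) : F) * t)) ∧
    (gammaMap (F := F) l1 l2 ∘ uAB t ∘ gammaMap l1⁻¹ l2⁻¹ =
      uAB (((l2 : Fˣ) : F) * t)) ∧
    (gammaMap (F := F) l1 l2 ∘ u2AB t ∘ gammaMap l1⁻¹ l2⁻¹ =
      u2AB (((l1 : Fˣ) : F) * t)) ∧
    (gammaMap (F := F) l1 l2 ∘ u3AB t ∘ gammaMap l1⁻¹ l2⁻¹ =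
      u3AB (((l1 ^ 2 * l2⁻¹ : Fˣ) : F) * t)) ∧
    (gammaMap (F := F) l1 l2 ∘ u3A2B t ∘ gammaMap l1⁻¹ l2⁻¹ =
      u3A2B (((l1 * l2 : Fˣ) : F) * t)) := by
  refine ⟨?_, ?_, ?_, ?_, ?_, ?_⟩ <;> funext z <;>
    simp only [Function.comp, gammaMap, uA, uB, uAB, u2AB, u3AB, u3A2B] <;>
    refine Prod.ext ?_ ?_ <;> ext i j <;> fin_cases i <;> fin_cases j <;>
    simp [Matrix.mul_apply, Matrix.vecMul, dotProduct, Fin.sum_univ_two, diagonal,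
      Units.val_inv_eq_inv_val] <;>
    field_simp <;> ring

end Aux

/-- Conjugation of the positive root maps of `G₂ = Aut(C)` by the torus element
`γ(λ₁,λ₂)` rescales the parameter by the value of the corresponding root:
`α ↦ λ₁λ₂⁻¹`, `β ↦ λ₂²λ₁⁻¹`, `α+β ↦ λ₂`, `2α+β ↦ λ₁`, `3α+β ↦ λ₁²λ₂⁻¹`,
`3α+2β ↦ λ₁λ₂`.  In particular conjugation by the order-two element `γ(1,−1)` maps
each positive root map `u_δ(t)` to `u_δ(±t)`, so the corresponding involution
stabilizes the standard Borel subgroup. -/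
theorem torus_conjugation_of_root_maps (l1 l2 : Fˣ) (t : F) :
    (gammaMap (F := F) l1 l2 ∘ uA t ∘ gammaMap l1⁻¹ l2⁻¹ =
      uA (((l1 * l2⁻¹ : Fˣ) : F) * t)) ∧
    (gammaMap (F := F) l1 l2 ∘ uB t ∘ gammaMap l1⁻¹ l2⁻¹ =
      uB (((l2 ^ 2 * l1⁻¹ : Fˣ) : F) * t)) ∧
    (gammaMap (F := F) l1 l2 ∘ uAB t ∘ gammaMap l1⁻¹ l2⁻¹ =
      uAB (((l2 : Fˣ) : F) * t)) ∧
    (gammaMap (F := F) l1 l2 ∘ u2AB t ∘ gammaMap l1⁻¹ l2⁻¹ =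
      u2AB (((l1 : Fˣ) : F) * t)) ∧
    (gammaMap (F := F) l1 l2 ∘ u3AB t ∘ gammaMap l1⁻¹ l2⁻¹ =
      u3AB (((l1 ^ 2 * l2⁻¹ : Fˣ) : F) * t)) ∧
    (gammaMap (F := F) l1 l2 ∘ u3A2B t ∘ gammaMap l1⁻¹ l2⁻¹ =
      u3A2B (((l1 * l2 : Fˣ) : F) * t)) ∧
    -- the specialization to the order-two torus element γ(1,−1)
    (gammaMap (F := F) 1 (-1) ∘ uA t ∘ gammaMap 1⁻¹ (-1)⁻¹ = uA (-t)) ∧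
    (gammaMap (F := F) 1 (-1) ∘ uB t ∘ gammaMap 1⁻¹ (-1)⁻¹ = uB t) ∧
    (gammaMap (F := F) 1 (-1) ∘ uAB t ∘ gammaMap 1⁻¹ (-1)⁻¹ = uAB (-t)) ∧
    (gammaMap (F := F) 1 (-1) ∘ u2AB t ∘ gammaMap 1⁻¹ (-1)⁻¹ = u2AB t) ∧
    (gammaMap (F := F) 1 (-1) ∘ u3AB t ∘ gammaMap 1⁻¹ (-1)⁻¹ = u3AB (-t)) ∧
    (gammaMap (F := F) 1 (-1) ∘ u3A2B t ∘ gammaMap 1⁻¹ (-1)⁻¹ = u3A2B (-t)) := by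
  obtain ⟨h1, h2, h3, h4, h5, h6⟩ := conj_all (F := F) l1 l2 t
  obtain ⟨g1, g2, g3, g4, g5, g6⟩ := conj_all (F := F) 1 (-1) t
  refine ⟨h1, h2, h3, h4, h5, h6, ?_, ?_, ?_, ?_, ?_, ?_⟩ <;>
    simp only [g1, g2, g3, g4, g5, g6] <;> norm_num
end
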